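/- arXiv:2303.13734 — 2 statements merged into one kernel-verified Lean document; each statement's English description precedes it below -/
import Mathlib

section
/- Let G ≤ S₂^k ≤ S_{2k} be a subdirect product of k copies of S₂ (i.e., G projects onto each factor), where the i-th factor S₂ acts on {2i−1, 2i}. Let φ : S₂^k → (ℤ/2ℤ)^k be the isomorphism sending the transposition (2i−1, 2i) to the standard basis vector e_i, and let C := φ(G) be the corresponding binary linear code. Let A ≤ S_k be the permutation automorphism group of the code C (permutations of coordinates preserving C). Then the normaliser of G in S_{2k} equals the semidirect product S₂^k ⋊ A, i.e., the group generated by S₂^k and the coordinate permutations in A (acting on {1,…,2k} by permuting the k pairs {2i−1,2i}). -/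
/-!
Every element of `S₂^k` is determined by its flip vector in `(ℤ/2ℤ)^k`, and conjugating it by a
permutation `σ` that maps the `i`-th pair onto the `τ i`-th pair permutes the flip vector by `τ`.
If `σ` normalises `G`, then `σ` must map pairs to pairs: `G` swaps every pair, and the conjugates
of these swaps again lie in `S₂^k`. So `σ = g₀ · τ` with `g₀ ∈ S₂^k`, and conjugation by `σ` turns
the code `φ(G)` into its image under `τ`. Conversely such a `σ⁻¹` conjugates `G` into itself, which
for a finite group already means that it normalises `G`.
-/

open Equiv

namespace PairPerm

variable {ι : Type*} {σ σ' g : Perm (ι × Fin 2)} {τ τ' : Perm ι}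
  {G : Subgroup (Perm (ι × Fin 2))}

/-- `σ` permutes the pairs `{(i, 0), (i, 1)}` according to `τ`; `S₂^k` is `{g | Covers g 1}`. -/
def Covers (σ : Perm (ι × Fin 2)) (τ : Perm ι) : Prop :=
  ∀ p, (σ p).1 = τ p.1

theorem Covers.apply_eq (h : Covers σ τ) (p : ι × Fin 2) : σ p = (τ p.1, (σ p).2) :=
  Prod.ext (h p) rfl

theorem Covers.mul (h : Covers σ τ) (h' : Covers σ' τ') : Covers (σ * σ') (τ * τ') :=
  fun p => by simp only [Perm.mul_apply, h _, h' _]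

theorem Covers.inv (h : Covers σ τ) : Covers σ⁻¹ τ⁻¹ := fun p => by
  rw [Perm.eq_inv_iff_eq, ← h]
  simp

theorem covers_prodCongr (τ : Perm ι) : Covers (prodCongr τ (Equiv.refl (Fin 2))) τ :=
  fun _ => rfl

theorem exists_covers_of_fst_apply_eq (h : ∀ i x, (σ (i, x)).1 = (σ (i, 0)).1)
    (h' : ∀ i x, (σ⁻¹ (i, x)).1 = (σ⁻¹ (i, 0)).1) :
    ∃ τ, Covers σ τ :=
  ⟨{ toFun := fun i => (σ (i, 0)).1
     invFun := fun j => (σ⁻¹ (j, 0)).1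
     left_inv := fun i => by
       change (σ⁻¹ ((σ (i, 0)).1, 0)).1 = i
       rw [← h' _ (σ (i, 0)).2]
       simp
     right_inv := fun j => by
       change (σ ((σ⁻¹ (j, 0)).1, 0)).1 = j
       rw [← h _ (σ⁻¹ (j, 0)).2]
       simp },
   fun ⟨i, x⟩ => h i x⟩

theorem fst_apply_eq_of_mem_normalizer
    (hG : ∀ g ∈ G, Covers g 1) (hsub : ∀ i, ∃ g ∈ G, g (i, 0) = (i, 1))
    (hσ : σ ∈ Subgroup.normalizer (G : Set (Perm (ι × Fin 2))))
    (i : ι) (x : Fin 2) : (σ (i, x)).1 = (σ (i, 0)).1 := by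
  obtain rfl | rfl : x = 0 ∨ x = 1 := by omega
  · rfl
  obtain ⟨g, hg, hgi⟩ := hsub i
  have hconj := hG _ ((Subgroup.mem_normalizer_iff.mp hσ g).mp hg) (σ (i, 0))
  simpa [hgi] using hconj

theorem exists_covers_of_mem_normalizer
    (hG : ∀ g ∈ G, Covers g 1) (hsub : ∀ i, ∃ g ∈ G, g (i, 0) = (i, 1))
    (hσ : σ ∈ Subgroup.normalizer (G : Set (Perm (ι × Fin 2)))) :
    ∃ τ, Covers σ τ :=
  exists_covers_of_fst_apply_eq (fst_apply_eq_of_mem_normalizer hG hsub hσ)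
    (fst_apply_eq_of_mem_normalizer hG hsub (inv_mem hσ))

variable [DecidableEq ι]

/-- The isomorphism `φ : S₂^k → (ℤ/2ℤ)^k`, extended by junk values to all of `Perm (ι × Fin 2)`. -/
def flipVector (g : Perm (ι × Fin 2)) : ι → ZMod 2 :=
  fun i => if g (i, 0) = (i, 1) then 1 else 0

theorem Covers.apply_mk (hg : Covers g 1) (i : ι) (x : Fin 2) :
    g (i, x) = (i, if g (i, 0) = (i, 1) then x + 1 else x) := by
  obtain ⟨a, ha⟩ : ∃ a, g (i, 0) = (i, a) := ⟨_, hg.apply_eq _⟩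
  obtain ⟨b, hb⟩ : ∃ b, g (i, 1) = (i, b) := ⟨_, hg.apply_eq _⟩
  have hab : a ≠ b := fun h => by simp [h, ← hb] at ha
  obtain rfl | rfl : x = 0 ∨ x = 1 := by omega
  all_goals simp only [ha, hb, Prod.mk.injEq, true_and]; split_ifs <;> omega

theorem injOn_flipVector : Set.InjOn (flipVector (ι := ι)) {g | Covers g 1} := by
  intro g hg h hh heq
  ext ⟨i, x⟩ : 1
  have hi := congrFun heq i
  rw [hg.apply_mk, hh.apply_mk]
  unfold flipVector at hi
  split_ifs at hi ⊢ <;> simp_all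

theorem flipVector_conj (hσ : Covers σ τ) (hg : Covers g 1) :
    flipVector (σ * g * σ⁻¹) = flipVector g ∘ ⇑τ⁻¹ := by
  funext j
  obtain ⟨a, ha⟩ : ∃ a, σ⁻¹ (j, 0) = (τ⁻¹ j, a) := ⟨_, hσ.inv.apply_eq _⟩
  obtain ⟨b, hb⟩ : ∃ b, σ⁻¹ (j, 1) = (τ⁻¹ j, b) := ⟨_, hσ.inv.apply_eq _⟩
  have hab : a ≠ b := fun h =>
    absurd (congrArg Prod.snd (σ⁻¹.injective (ha.trans (h ▸ hb.symm)))) zero_ne_one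
  have hiff : (σ * g * σ⁻¹) (j, 0) = (j, 1) ↔ g (τ⁻¹ j, a) = (τ⁻¹ j, b) := by
    rw [Perm.mul_apply, Perm.mul_apply, ← Perm.eq_inv_iff_eq, ha, hb]
  simp only [flipVector, Function.comp_apply, hiff]
  rw [hg.apply_mk _ a]
  simp only [Prod.mk.injEq, true_and]
  split_ifs <;> first | rfl | omega

theorem comp_mem_image_flipVector_of_mem_normalizer
    (hG : ∀ g ∈ G, Covers g 1) (hστ : Covers σ τ)
    (hσ : σ ∈ Subgroup.normalizer (G : Set (Perm (ι × Fin 2)))) :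
    ∀ v ∈ flipVector '' (G : Set (Perm (ι × Fin 2))),
      v ∘ ⇑τ ∈ flipVector '' (G : Set (Perm (ι × Fin 2))) := by
  rintro _ ⟨g, hg, rfl⟩
  refine ⟨σ⁻¹ * g * σ⁻¹⁻¹, (Subgroup.mem_normalizer_iff.mp (inv_mem hσ) g).mp hg, ?_⟩
  rw [flipVector_conj hστ.inv (hG g hg), inv_inv]

theorem mem_normalizer_of_covers [Finite ι]
    (hG : ∀ g ∈ G, Covers g 1) (hστ : Covers σ τ)
    (hτ : ∀ v ∈ flipVector '' (G : Set (Perm (ι × Fin 2))),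
      v ∘ ⇑τ ∈ flipVector '' (G : Set (Perm (ι × Fin 2)))) :
    σ ∈ Subgroup.normalizer (G : Set (Perm (ι × Fin 2))) := by
  rw [← inv_inv σ]
  refine inv_mem (Subgroup.mem_normalizer_fintype fun g hg => ?_)
  have hconj : Covers (σ⁻¹ * g * σ⁻¹⁻¹) 1 := by
    simpa using (hστ.inv.mul (hG g hg)).mul hστ.inv.inv
  rw [← injOn_flipVector.mem_image_iff hG hconj, flipVector_conj hστ.inv (hG g hg), inv_inv]
  exact hτ _ ⟨g, hg, rfl⟩

end PairPerm

open PairPerm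

/-- Let `G ≤ S₂^k ≤ S_{2k}` be a subdirect product of `k` copies of `S₂`, the
`i`-th copy acting on the pair `{(i,0),(i,1)}` (we realise `{1,…,2k}` as
`Fin k × Fin 2`, and `S₂^k` as the permutations fixing the first coordinate).
Let `C ⊆ (ℤ/2ℤ)^k` be the binary linear code corresponding to `G` under the
isomorphism sending the `i`-th transposition to the standard vector `e_i`, and
let `A ≤ S_k` be the permutation automorphism group of `C`.  Then the symmetric
normaliser of `G` is exactly `S₂^k ⋊ A`: it consists of the products `g₀ · τ`
with `g₀ ∈ S₂^k` and `τ ∈ A` acting by permuting the `k` pairs. -/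
theorem stmt_15 (k : ℕ) (G : Subgroup (Equiv.Perm (Fin k × Fin 2)))
    (hGP : ∀ g ∈ G, ∀ p : Fin k × Fin 2, (g p).1 = p.1)
    (hsub : ∀ i : Fin k, ∃ g ∈ G, g (i, 0) = (i, 1))
    (C : Set (Fin k → ZMod 2))
    (hC : ∀ v : Fin k → ZMod 2,
      v ∈ C ↔ ∃ g ∈ G, ∀ i : Fin k, v i = if g (i, 0) = (i, 1) then 1 else 0) :
    ∀ σ : Equiv.Perm (Fin k × Fin 2),
      σ ∈ Subgroup.normalizer (G : Set (Equiv.Perm (Fin k × Fin 2))) ↔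
      ∃ (g₀ : Equiv.Perm (Fin k × Fin 2)) (τ : Equiv.Perm (Fin k)),
        (∀ p : Fin k × Fin 2, (g₀ p).1 = p.1) ∧
        (∀ v ∈ C, v ∘ ⇑τ ∈ C) ∧
        σ = g₀ * Equiv.prodCongr τ (Equiv.refl (Fin 2)) := by
  have hG : ∀ g ∈ G, Covers g 1 := hGP
  obtain rfl : C = flipVector '' (G : Set (Perm (Fin k × Fin 2))) := by
    ext v
    simp [hC, funext_iff, flipVector, eq_comm]
  intro σ
  constructor
  · intro hσ
    obtain ⟨τ, hστ⟩ := exists_covers_of_mem_normalizer hG hsub hσ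
    refine ⟨σ * (prodCongr τ (Equiv.refl _))⁻¹, τ, ?_,
      comp_mem_image_flipVector_of_mem_normalizer hG hστ hσ, (inv_mul_cancel_right σ _).symm⟩
    have hcov := hστ.mul (covers_prodCongr τ).inv
    rwa [mul_inv_cancel] at hcov
  · rintro ⟨g₀, τ, hg₀, hτ, rfl⟩
    have hστ : Covers (g₀ * prodCongr τ (Equiv.refl _)) τ := by
      simpa only [one_mul] using (show Covers g₀ 1 from hg₀).mul (covers_prodCongr τ)
    exact mem_normalizer_of_covers hG hστ hτ
end

section
/- Let G₁,…,G_m be pairwise non-permutation-isomorphic transitive permutation groups of degrees d₁,…,d_m, and let U ≤ G₁^{e₁} × ⋯ × G_m^{e_m} act on the disjoint union of the domains (so U has orbits contained in the e₁+⋯+e_m domain pieces, and the projection to each factor is surjective, i.e., U is a subdirect product). Then the normaliser of U in the symmetric group on the full domain is contained in (N_{S_{d₁}}(G₁) ≀ S_{e₁}) × ⋯ × (N_{S_{d_m}}(G_m) ≀ S_{e_m}). -/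
/-!
Conjugation by `σ` in the normaliser of `U` carries `U`-orbits to `U`-orbits. Since `U` fixes
every block `{(i, c)} × X i` setwise and is transitive on it (its projection there is the
transitive group `G i`), `σ` carries each block `(i, c)` bijectively onto some block `(j, c')`,
say via `f : X i ≃ X j`. Comparing `σ u σ⁻¹` on the two blocks shows that conjugation by `f`
carries `G i` onto `G j`; so `j = i` by non-isomorphism, and then `f` normalises `G i`.
-/

open Equiv

variable {ι : Type*} {B X : ι → Type*}

/-- `U ≤ ∏ᵢ (G i)^(B i)`, where `B i` indexes the copies of the domain `X i` of `G i`. -/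
def LeBlockProduct (G : ∀ i, Subgroup (Perm (X i))) (U : Subgroup (Perm (Σ i, B i × X i))) :
    Prop :=
  ∀ u ∈ U, ∀ i (c : B i), ∃ π ∈ G i, ∀ x, u ⟨i, (c, x)⟩ = ⟨i, (c, π x)⟩

def BlockProjSurjective (G : ∀ i, Subgroup (Perm (X i)))
    (U : Subgroup (Perm (Σ i, B i × X i))) : Prop :=
  ∀ i (c : B i), ∀ π ∈ G i, ∃ u ∈ U, ∀ x, u ⟨i, (c, x)⟩ = ⟨i, (c, π x)⟩

section Normalizer

variable {G : ∀ i, Subgroup (Perm (X i))} {U : Subgroup (Perm (Σ i, B i × X i))}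
  {σ : Perm (Σ i, B i × X i)}

theorem exists_mem_apply_blockProj_eq (hsub : BlockProjSurjective G U)
    (hσ : σ ∈ Subgroup.normalizer (U : Set (Perm (Σ i, B i × X i)))) {i : ι} (c : B i)
    {π : Perm (X i)} (hπ : π ∈ G i) :
    ∃ v ∈ U, ∀ x, σ ⟨i, (c, π x)⟩ = v (σ ⟨i, (c, x)⟩) := by
  obtain ⟨u, hu, hπu⟩ := hsub i c π hπ
  refine ⟨σ * u * σ⁻¹, (Subgroup.mem_normalizer_iff.mp hσ u).mp hu, fun x => ?_⟩
  simp [Perm.mul_apply, ← hπu]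

theorem exists_apply_eq_of_apply_eq (hle : LeBlockProduct G U) (hsub : BlockProjSurjective G U)
    (hσ : σ ∈ Subgroup.normalizer (U : Set (Perm (Σ i, B i × X i))))
    {i : ι} (htrans : MulAction.IsPretransitive (G i) (X i)) {c : B i} {x₀ : X i}
    {j : ι} {c' : B j} {y₀ : X j} (h₀ : σ ⟨i, (c, x₀)⟩ = ⟨j, (c', y₀)⟩) (x : X i) :
    ∃ y, σ ⟨i, (c, x)⟩ = ⟨j, (c', y)⟩ := by
  obtain ⟨⟨π, hπ⟩, hπx : π x₀ = x⟩ := htrans.exists_smul_eq x₀ x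
  obtain ⟨v, hv, hσv⟩ := exists_mem_apply_blockProj_eq hsub hσ c hπ
  obtain ⟨π', -, hπ'⟩ := hle v hv j c'
  exact ⟨π' y₀, by rw [← hπx, hσv, h₀, hπ']⟩

theorem exists_equiv_block_apply_eq (hle : LeBlockProduct G U) (hsub : BlockProjSurjective G U)
    (htrans : ∀ i, MulAction.IsPretransitive (G i) (X i))
    (hσ : σ ∈ Subgroup.normalizer (U : Set (Perm (Σ i, B i × X i)))) (i : ι) (c : B i) :
    ∃ (j : ι) (c' : B j) (f : X i ≃ X j), ∀ x, σ ⟨i, (c, x)⟩ = ⟨j, (c', f x)⟩ := by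
  cases isEmpty_or_nonempty (X i) with
  | inl _ => exact ⟨i, c, Equiv.refl _, isEmptyElim⟩
  | inr hne =>
    obtain ⟨x₀⟩ := hne
    rcases hσ₀ : σ ⟨i, (c, x₀)⟩ with ⟨j, c', y₀⟩
    have hσ₀' : σ⁻¹ ⟨j, (c', y₀)⟩ = ⟨i, (c, x₀)⟩ := by rw [Perm.inv_eq_iff_eq, hσ₀]
    choose g hg using exists_apply_eq_of_apply_eq hle hsub hσ (htrans i) hσ₀
    choose g' hg' using exists_apply_eq_of_apply_eq hle hsub (inv_mem hσ) (htrans j) hσ₀'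
    refine ⟨j, c', ⟨g, g', fun x => ?_, fun y => ?_⟩, hg⟩
    · simpa [← hg] using (hg' (g x)).symm
    · simpa [← hg'] using (hg (g' y)).symm

theorem permCongr_mem_of_block_apply_eq (hle : LeBlockProduct G U)
    (hsub : BlockProjSurjective G U)
    (hσ : σ ∈ Subgroup.normalizer (U : Set (Perm (Σ i, B i × X i))))
    {i j : ι} {c : B i} {c' : B j} {f : X i ≃ X j} (hf : ∀ x, σ ⟨i, (c, x)⟩ = ⟨j, (c', f x)⟩)
    {π : Perm (X i)} (hπ : π ∈ G i) : f.permCongr π ∈ G j := by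
  obtain ⟨v, hv, hσv⟩ := exists_mem_apply_blockProj_eq hsub hσ c hπ
  obtain ⟨π', hπ'G, hπ'⟩ := hle v hv j c'
  have hcomm : ∀ x, f (π x) = π' (f x) := fun x => by
    simpa [hf, hπ'] using hσv x
  convert hπ'G using 1
  ext y
  simp [hcomm]

theorem mem_iff_permCongr_mem_of_block_apply_eq (hle : LeBlockProduct G U)
    (hsub : BlockProjSurjective G U)
    (hσ : σ ∈ Subgroup.normalizer (U : Set (Perm (Σ i, B i × X i))))
    {i j : ι} {c : B i} {c' : B j} {f : X i ≃ X j} (hf : ∀ x, σ ⟨i, (c, x)⟩ = ⟨j, (c', f x)⟩)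
    (π : Perm (X i)) : π ∈ G i ↔ f.permCongr π ∈ G j := by
  have hf' : ∀ y, σ⁻¹ ⟨j, (c', y)⟩ = ⟨i, (c, f.symm y)⟩ := fun y => by
    rw [Perm.inv_eq_iff_eq, hf, apply_symm_apply]
  refine ⟨permCongr_mem_of_block_apply_eq hle hsub hσ hf, fun h => ?_⟩
  have := permCongr_mem_of_block_apply_eq hle hsub (inv_mem hσ) hf' h
  rwa [← permCongr_symm, symm_apply_apply] at this

end Normalizer

theorem Equiv.Perm.mem_normalizer_of_permCongr_mem_iff {α : Type*} {H : Subgroup (Perm α)}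
    {f : Perm α} (hf : ∀ π, π ∈ H ↔ f.permCongr π ∈ H) :
    f ∈ Subgroup.normalizer (H : Set (Perm α)) :=
  Subgroup.mem_normalizer_iff.mpr fun π => by rw [← permCongr_eq_mul]; exact hf π

/-- Let `G₁,…,G_m` be pairwise non-permutation-isomorphic transitive groups of
degrees `d₁,…,d_m` and let `U` be a subdirect product of
`G₁^{e₁} × ⋯ × G_m^{e_m}`, acting on the disjoint union
`Ω = Σ i, Fin (e i) × Fin (d i)` of the domains.  Then every element of the
symmetric normaliser of `U` lies in
`(N(G₁) ≀ S_{e₁}) × ⋯ × (N(G_m) ≀ S_{e_m})`: it maps each copy of the domain of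
`G_i` onto another copy, via a permutation normalising `G_i`. -/
theorem stmt_16 (m : ℕ) (d e : Fin m → ℕ)
    (G : ∀ i : Fin m, Subgroup (Equiv.Perm (Fin (d i))))
    (htrans : ∀ i, MulAction.IsPretransitive (G i) (Fin (d i)))
    (hnoniso : ∀ i j : Fin m, i ≠ j →
      ¬ ∃ f : Fin (d i) ≃ Fin (d j),
        ∀ π : Equiv.Perm (Fin (d i)), π ∈ G i ↔ f.permCongr π ∈ G j)
    (U : Subgroup (Equiv.Perm (Σ i : Fin m, Fin (e i) × Fin (d i))))
    (hUle : ∀ u ∈ U, ∀ (i : Fin m) (c : Fin (e i)),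
      ∃ π ∈ G i, ∀ x : Fin (d i), u ⟨i, (c, x)⟩ = ⟨i, (c, π x)⟩)
    (hsub : ∀ (i : Fin m) (c : Fin (e i)), ∀ π ∈ G i,
      ∃ u ∈ U, ∀ x : Fin (d i), u ⟨i, (c, x)⟩ = ⟨i, (c, π x)⟩) :
    ∀ σ ∈ Subgroup.normalizer (U : Set (Equiv.Perm (Σ i : Fin m, Fin (e i) × Fin (d i)))), ∀ (i : Fin m) (c : Fin (e i)),
      ∃ (c' : Fin (e i)) (π : Equiv.Perm (Fin (d i))),
        π ∈ Subgroup.normalizer (G i : Set (Equiv.Perm (Fin (d i)))) ∧ ∀ x : Fin (d i), σ ⟨i, (c, x)⟩ = ⟨i, (c', π x)⟩ := by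
  intro σ hσ i c
  obtain ⟨j, c', f, hf⟩ := exists_equiv_block_apply_eq hUle hsub htrans hσ i c
  have hconj := mem_iff_permCongr_mem_of_block_apply_eq hUle hsub hσ hf
  obtain rfl : j = i := by_contra fun hji => hnoniso i j (Ne.symm hji) ⟨f, hconj⟩
  exact ⟨c', f, Perm.mem_normalizer_of_permCongr_mem_iff hconj, hf⟩
end
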